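/- Every polar algebra satisfies the operator identity y∘(y∘x) = h(y,y)·x for all x in A₀ and y in A₁ (i.e., the relation (iii) of the polar decomposition holds with roles of A₀ and A₁ exchanged on the relevant subspace). -/
import Mathlib


/-- In a polar algebra, `y∘(y∘x) = h(y,y)·x` for all `x ∈ A₀`, `y ∈ A₁`. -/
theorem polar_reversed_identity
    {A : Type*} [AddCommGroup A] [Module ℝ A] [FiniteDimensional ℝ A]
    (mul : A →ₗ[ℝ] A →ₗ[ℝ] A)
    (hcomm : ∀ x y : A, mul x y = mul y x)
    (h : A →ₗ[ℝ] A →ₗ[ℝ] ℝ)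
    (hsymm : ∀ x y : A, h x y = h y x)
    (hpos : ∀ x : A, x ≠ 0 → 0 < h x x)
    (hinv : ∀ x y z : A, h (mul x y) z = h x (mul y z))
    (A₀ A₁ : Submodule ℝ A)
    (hA₀ : A₀ ≠ ⊥) (hA₁ : A₁ ≠ ⊥)
    (hsum : A₀ ⊔ A₁ = ⊤) (hind : A₀ ⊓ A₁ = ⊥)
    (horth : ∀ x ∈ A₀, ∀ y ∈ A₁, h x y = 0)
    (hmul00 : ∀ x ∈ A₀, ∀ y ∈ A₀, mul x y = 0)
    (hmul11 : ∀ x ∈ A₁, ∀ y ∈ A₁, mul x y ∈ A₀)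
    (hpolar : ∀ x ∈ A₀, ∀ y ∈ A₁, mul x (mul x y) = h x x • y) :
    ∀ x ∈ A₀, ∀ y ∈ A₁, mul y (mul y x) = h y y • x := by
  intro x hx y hy
  set z := mul y (mul y x) - h y y • x with hzdef
  -- Key: pairing of y∘(y∘x) against A₀ via polarization of the polar identity
  have key0 : ∀ w ∈ A₀, h (mul y (mul y x)) w = h y y * h x w := by
    intro w hw
    have hxw := hpolar (x + w) (A₀.add_mem hx hw) y hy
    have e1 := congrArg (fun v => h v y) hxw
    simp only [map_add, LinearMap.add_apply, map_smul, LinearMap.smul_apply,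
      smul_eq_mul] at e1
    have t1 : h (mul x (mul x y)) y = h x x * h y y := by
      rw [hpolar x hx y hy]; simp
    have t4 : h (mul w (mul w y)) y = h w w * h y y := by
      rw [hpolar w hw y hy]; simp
    have t2 : h (mul x (mul w y)) y = h (mul w y) (mul x y) := by
      rw [hcomm x (mul w y), hinv]
    have t3 : h (mul w (mul x y)) y = h (mul x y) (mul w y) := by
      rw [hcomm w (mul x y), hinv]
    rw [t1, t2, t3, t4, hsymm (mul w y) (mul x y), hsymm w x] at e1
    have hkey : h (mul x y) (mul w y) = h x w * h y y := by nlinarith [e1]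
    calc h (mul y (mul y x)) w = h (mul y x) (mul y w) := by
          rw [hcomm y (mul y x), hinv]
      _ = h (mul x y) (mul w y) := by rw [hcomm y x, hcomm y w]
      _ = h y y * h x w := by rw [hkey]; ring
  -- Pairing against A₁ vanishes
  have key1 : ∀ w ∈ A₁, h (mul y (mul y x)) w = 0 := by
    intro w hw
    have : h (mul y (mul y x)) w = h y (mul x (mul y w)) := by
      rw [hcomm y (mul y x), hinv, hinv]
    rw [this, hmul00 x hx (mul y w) (hmul11 y hy w hw), map_zero]
  -- z is orthogonal to everything
  have hz0 : ∀ v : A, h z v = 0 := by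
    intro v
    have hv : v ∈ A₀ ⊔ A₁ := by rw [hsum]; exact Submodule.mem_top
    obtain ⟨a, ha, b, hb, rfl⟩ := Submodule.mem_sup.mp hv
    have hza : h z a = 0 := by
      simp only [hzdef, map_sub, LinearMap.sub_apply, map_smul, LinearMap.smul_apply,
        smul_eq_mul]
      rw [key0 a ha]; ring
    have hzb : h z b = 0 := by
      simp only [hzdef, map_sub, LinearMap.sub_apply, map_smul, LinearMap.smul_apply,
        smul_eq_mul]
      rw [key1 b hb, horth x hx b hb]; ring
    rw [map_add, hza, hzb, add_zero]
  have hzz : z = 0 := by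
    by_contra hne
    have h1 := hpos z hne
    have h2 := hz0 z
    linarith
  have := sub_eq_zero.mp hzz
  exact this
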